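/- arXiv:1808.06756 — 2 statements merged into one kernel-verified Lean document; each statement's English description precedes it below -/
import Mathlib

section
/- Let r > 1, K = (r − r⁻¹)², f = diag(r, r⁻¹), and let g₀ = g be a 2×2 matrix over ℝ (or ℂ) with determinant 1. Define g_{m+1} = g_m f g_m⁻¹, writing g_m = [[a_m, b_m],[c_m, d_m]]. Then each g_m has determinant 1 and the products w_m = b_m c_m satisfy the recursion w_{m+1} = −K (1 + w_m) w_m. -/
/-!
Conjugating `diag(x, y)` by `g = [[a, b], [c, d]]` of determinant one gives off-diagonal entries
`ab(y - x)` and `cd(x - y)`, so their product is `-(x - y)² · (ad) · (bc)`, and `ad = 1 + bc`.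
Conjugation preserves determinants and `det f = 1`, so every `g m` has determinant one and this
identity applies at each step.
-/

open Matrix

namespace Matrix

variable {R : Type*} [CommRing R]

theorem inv_fin_two_of_det_eq_one {g : Matrix (Fin 2) (Fin 2) R} (hg : g.det = 1) :
    g⁻¹ = !![g 1 1, -g 0 1; -g 1 0, g 0 0] := by
  rw [inv_def, hg, Ring.inverse_one, one_smul, adjugate_fin_two]

theorem conj_diagonal_offDiag_mul {g : Matrix (Fin 2) (Fin 2) R} (hg : g.det = 1) (x y : R) :
    let h := g * !![x, 0; 0, y] * g⁻¹
    h 0 1 * h 1 0 = -(x - y) ^ 2 * (1 + g 0 1 * g 1 0) * (g 0 1 * g 1 0) := by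
  have had : g 0 0 * g 1 1 = 1 + g 0 1 * g 1 0 := by
    rw [det_fin_two] at hg
    linear_combination hg
  simp only [inv_fin_two_of_det_eq_one hg, mul_apply, Fin.sum_univ_two, of_apply, cons_val',
    cons_val_zero, cons_val_one, empty_val', cons_val_fin_one]
  linear_combination (-(x - y) ^ 2 * g 0 1 * g 1 0) * had

theorem det_conj_eq_one_of_det_eq_one {g f : Matrix (Fin 2) (Fin 2) R} (hg : g.det = 1)
    (hf : f.det = 1) : (g * f * g⁻¹).det = 1 := by
  rw [det_conj ((isUnit_iff_isUnit_det g).mpr (hg ▸ isUnit_one)), hf]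

end Matrix

theorem stmt2 (r : ℝ) (hr : 1 < r) (K : ℝ) (hK : K = (r - r⁻¹) ^ 2)
    (g : ℕ → Matrix (Fin 2) (Fin 2) ℝ)
    (hdet0 : (g 0).det = 1)
    (hrec : ∀ m, g (m + 1) = g m * (!![r, 0; 0, r⁻¹] : Matrix (Fin 2) (Fin 2) ℝ) * (g m)⁻¹)
    (w : ℕ → ℝ) (hw : ∀ m, w m = g m 0 1 * g m 1 0) :
    ∀ m, (g m).det = 1 ∧ w (m + 1) = -K * (1 + w m) * w m := by
  have hf : (!![r, 0; 0, r⁻¹] : Matrix (Fin 2) (Fin 2) ℝ).det = 1 := by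
    rw [det_fin_two_of, mul_zero, sub_zero, mul_inv_cancel₀ (by positivity)]
  have hdet : ∀ m, (g m).det = 1 := by
    intro m
    induction m with
    | zero => exact hdet0
    | succ n ih => rw [hrec n]; exact det_conj_eq_one_of_det_eq_one ih hf
  intro m
  refine ⟨hdet m, ?_⟩
  rw [hw, hw, hrec, hK]
  exact conj_diagonal_offDiag_mul (hdet m) r r⁻¹
end

section
/- Let 0 < K and let (w_m) be a sequence of real numbers with w_{m+1} = −K(1 + w_m)·w_m for all m, K(1 + |w_0|) = 1, and K(1 + |w_m|) ≥ 1 for all m. Then K(1 + |w_m|) = 1 for all m. -/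
/-!
Since `|1 + x| ≤ 1 + |x|`, the map `x ↦ -K (1 + x) x` does not increase `|x|` as long as
`K (1 + |x|) ≤ 1`. So if `K (1 + |w m|) = 1`, then `K (1 + |w (m + 1)|) ≤ 1`, and the lower bound
forces equality again.
-/

lemma abs_neg_mul_one_add_mul_self_le {K x : ℝ} (hK : 0 ≤ K) (hx : K * (1 + |x|) ≤ 1) :
    |-K * (1 + x) * x| ≤ |x| :=
  calc |-K * (1 + x) * x| = K * |1 + x| * |x| := by
        rw [abs_mul, abs_mul, abs_neg, abs_of_nonneg hK]
    _ ≤ K * (1 + |x|) * |x| := by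
        gcongr
        simpa only [abs_one] using abs_add_le (1 : ℝ) x
    _ ≤ 1 * |x| := by gcongr
    _ = |x| := one_mul _

theorem stmt4 (K : ℝ) (hK : 0 < K) (w : ℕ → ℝ)
    (hrec : ∀ m, w (m + 1) = -K * (1 + w m) * w m)
    (h0 : K * (1 + |w 0|) = 1)
    (hge : ∀ m, 1 ≤ K * (1 + |w m|)) :
    ∀ m, K * (1 + |w m|) = 1 := by
  intro m
  induction m with
  | zero => exact h0
  | succ n ih =>
    have h_abs_le : |w (n + 1)| ≤ |w n| := by
      rw [hrec]
      exact abs_neg_mul_one_add_mul_self_le hK.le ih.le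
    have h_le : K * (1 + |w (n + 1)|) ≤ 1 := by
      calc K * (1 + |w (n + 1)|) ≤ K * (1 + |w n|) := by gcongr
        _ = 1 := ih
    exact le_antisymm h_le (hge (n + 1))
end
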